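/- arXiv:2204.04407 — 5 statements merged into one kernel-verified Lean document; each statement's English description precedes it below -/
import Mathlib

section
/- Let G be a finite group, p a prime, and P a Sylow p-subgroup of G. Then the intersection of the commutator subgroup of G, the center of G, and P is contained in the commutator subgroup of P; that is, G' ∩ Z(G) ∩ P ≤ P'. -/
/-- Let `G` be a finite group, `p` a prime, and `P` a Sylow `p`-subgroup of `G`.
Then `G' ∩ Z(G) ∩ P ≤ P'`. -/
theorem commutator_inf_center_inf_sylow_le_commutator
    {G : Type*} [Group G] [Fintype G] (p : ℕ) [Fact p.Prime] (P : Sylow p G) :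
    commutator G ⊓ Subgroup.center G ⊓ (P : Subgroup G) ≤
      ⁅(P : Subgroup G), (P : Subgroup G)⁆ := by
  intro g hg
  obtain ⟨⟨hg', hgZ⟩, hgP⟩ := hg
  set H : Subgroup G := (P : Subgroup G) with hH
  set ϕ : H →* Abelianization H := Abelianization.of with hϕ
  have hcentral : ∀ (k : ℕ) (g₀ : G), g₀⁻¹ * g ^ k * g₀ ∈ H → g₀⁻¹ * g ^ k * g₀ = g ^ k := by
    intro k g₀ _
    have hc : g ^ k ∈ Subgroup.center G := Subgroup.pow_mem _ hgZ k
    rw [Subgroup.mem_center_iff] at hc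
    rw [mul_assoc, ← hc g₀, ← mul_assoc, inv_mul_cancel, one_mul]
  have key := MonoidHom.transfer_eq_pow ϕ g hcentral
  have h1 : (MonoidHom.transfer ϕ) g = 1 :=
    Abelianization.commutator_subset_ker (MonoidHom.transfer ϕ) hg'
  rw [h1] at key
  have hmem : (⟨g ^ H.index, MonoidHom.transfer_eq_pow_aux g hcentral⟩ : H) ∈ commutator H := by
    exact (QuotientGroup.eq_one_iff _).mp key.symm
  have hmapped : g ^ H.index ∈ ⁅H, H⁆ := by
    have hmap : Subgroup.map H.subtype (commutator H) = ⁅H, H⁆ := by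
      rw [commutator, Subgroup.map_commutator]
      congr 1 <;>
        · rw [← Subgroup.comap_top H.subtype, Subgroup.comap_subtype,
            Subgroup.subgroupOf_map_subtype, top_inf_eq]
    rw [← hmap]
    exact ⟨_, hmem, rfl⟩
  have horder : orderOf g ∣ Nat.card H := Subgroup.orderOf_dvd_natCard H hgP
  have hp_ndvd : ¬ p ∣ H.index := P.not_dvd_index
  have hcop : (H.index).Coprime (orderOf g) := by
    have hpH : Nat.card H = p ^ (Nat.card G).factorization p := P.card_eq_multiplicity
    have h2 : (H.index).Coprime (Nat.card H) := by
      rw [hpH]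
      exact (Nat.Prime.coprime_iff_not_dvd Fact.out).mpr hp_ndvd |>.symm.pow_right _
    exact h2.coprime_dvd_right horder
  obtain ⟨m, hm⟩ := exists_pow_eq_self_of_coprime hcop
  rw [← hm]
  exact Subgroup.pow_mem _ hmapped m
end

section
/- Let P be a finite p-group for a prime p. Then |P'| = p if and only if P is nonabelian and |P : C_P(x)| ≤ p for every x ∈ P (equivalently, the maximum of the conjugacy class sizes |P : C_P(x)| over x ∈ P equals p). -/
open Subgroup MulAction
open scoped commutatorElement

section Aux

variable {G : Type*} [Group G] [Fintype G] {p : ℕ} [Fact p.Prime]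

private theorem aux_index (hG : IsPGroup p G) {x : G}
    (hle : (centralizer ({x} : Set G)).index ≤ p)
    (hx : centralizer ({x} : Set G) ≠ ⊤) :
    (centralizer ({x} : Set G)).index = p := by
  obtain ⟨n, hn⟩ := IsPGroup.iff_card.mp hG
  have hdvd : (centralizer ({x} : Set G)).index ∣ p ^ n := hn ▸ index_dvd_card _
  obtain ⟨k, hk, he⟩ := (Nat.dvd_prime_pow (Fact.out : p.Prime)).mp hdvd
  have hne : (centralizer ({x} : Set G)).index ≠ 1 := fun h => hx (Subgroup.index_eq_one.mp h)
  rcases Nat.eq_zero_or_pos k with rfl | hkpos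
  · rw [pow_zero] at he; exact absurd he hne
  · have : p ≤ p ^ k := Nat.le_self_pow (by omega) p
    omega

private theorem aux_normal (hG : IsPGroup p G) {H : Subgroup G} (hH : H.index = p) :
    H.Normal := by
  have hQ : Nat.card (G ⧸ H) = p := by rw [← hH]; rfl
  have hmod := (hG.to_subgroup H).card_modEq_card_fixedPoints (G ⧸ H)
  rw [hQ] at hmod
  have hdvd : p ∣ Nat.card (fixedPoints H (G ⧸ H)) :=
    (Nat.modEq_zero_iff_dvd).mp (hmod.symm.trans (Nat.modEq_zero_iff_dvd.mpr dvd_rfl))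
  have hpos : 0 < Nat.card (fixedPoints H (G ⧸ H)) := by
    rw [Nat.card_pos_iff]
    refine ⟨⟨⟨((1 : G) : G ⧸ H), fun c => ?_⟩⟩, Set.Finite.to_subtype (Set.toFinite _)⟩
    show (((c : G) * 1 : G) : G ⧸ H) = _
    rw [QuotientGroup.eq]
    simp [H.inv_mem c.2]
  have hcard : Nat.card (fixedPoints H (G ⧸ H)) = p := by
    have h1 : Nat.card (fixedPoints H (G ⧸ H)) ≤ p := by
      rw [← hQ, Nat.card_coe_set_eq, ← Set.ncard_univ]
      exact Set.ncard_le_ncard (Set.subset_univ _) (Set.toFinite _)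
    have := Nat.le_of_dvd hpos hdvd
    omega
  have huniv : fixedPoints H (G ⧸ H) = Set.univ := by
    apply Set.eq_of_subset_of_ncard_le (Set.subset_univ _)
    rw [Set.ncard_univ, hQ, ← Nat.card_coe_set_eq, hcard]
  constructor
  intro a ha g
  have hfix : (⟨a, ha⟩ : H) • ((g⁻¹ : G) : G ⧸ H) = ((g⁻¹ : G) : G ⧸ H) := by
    have : ((g⁻¹ : G) : G ⧸ H) ∈ fixedPoints H (G ⧸ H) := huniv ▸ Set.mem_univ _
    exact this _
  rw [show (⟨a, ha⟩ : H) • ((g⁻¹ : G) : G ⧸ H) = (((a * g⁻¹ : G)) : G ⧸ H) from rfl,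
    QuotientGroup.eq] at hfix
  have : (g * a⁻¹ * g⁻¹ : G) ∈ H := by
    simpa [smul_eq_mul, mul_assoc] using hfix
  simpa [mul_assoc] using H.inv_mem this

/-- every element of `C(x)` commutes with every commutator `⁅x,g⁆` -/
private theorem aux_commute (hG : IsPGroup p G)
    (hle : ∀ x : G, (centralizer ({x} : Set G)).index ≤ p)
    (x g c : G) (hc : c ∈ centralizer ({x} : Set G)) : Commute c ⁅x, g⁆ := by
  by_cases hx : centralizer ({x} : Set G) = ⊤
  · have : Commute x g := by
      have := hx ▸ Subgroup.mem_top g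
      exact (mem_centralizer_singleton_iff.mp this).symm
    rw [this.commutator_eq]
    exact Commute.one_right c
  · have hnormal : (centralizer ({x} : Set G)).Normal := aux_normal hG (aux_index hG (hle x) hx)
    have hcx : Commute c x := mem_centralizer_singleton_iff.mp hc
    have hconj : g⁻¹ * c * g ∈ centralizer ({x} : Set G) := by
      simpa using hnormal.conj_mem c hc g⁻¹
    have hcgxg : Commute c (g * x * g⁻¹) := by
      have h1 : (g⁻¹ * c * g) * x = x * (g⁻¹ * c * g) :=
        mem_centralizer_singleton_iff.mp hconj
      show c * (g * x * g⁻¹) = (g * x * g⁻¹) * c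
      have h2 : c * (g * x * g⁻¹) = g * ((g⁻¹ * c * g) * x) * g⁻¹ := by group
      rw [h2, h1]; group
    have key : ⁅x, g⁆ = x * (g * x * g⁻¹)⁻¹ := by group
    rw [key]
    exact hcx.mul_right hcgxg.inv_right

/-- every commutator is central -/
private theorem aux_central (hG : IsPGroup p G)
    (hle : ∀ x : G, (centralizer ({x} : Set G)).index ≤ p)
    (x g : G) : ⁅x, g⁆ ∈ center G := by
  by_cases hxg : Commute x g
  · rw [hxg.commutator_eq]; exact Subgroup.one_mem _
  · have hgx : g ∉ centralizer ({x} : Set G) := fun h =>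
      hxg ((mem_centralizer_singleton_iff.mp h).symm)
    have hCx : centralizer ({x} : Set G) ≠ ⊤ := fun h => hgx (h ▸ Subgroup.mem_top g)
    set K := centralizer ({⁅x, g⁆} : Set G) with hK
    have h1 : centralizer ({x} : Set G) ≤ K := fun c hc =>
      mem_centralizer_singleton_iff.mpr (aux_commute hG hle x g c hc)
    have h2 : g ∈ K := by
      have h3 : Commute g ⁅g, x⁆ :=
        aux_commute hG hle g x g (mem_centralizer_singleton_iff.mpr rfl)
      have : Commute g ⁅x, g⁆ := by
        rw [← commutatorElement_inv]; exact h3.inv_right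
      exact mem_centralizer_singleton_iff.mpr this
    have hKtop : K = ⊤ := by
      have hdvd : K.index ∣ p := (aux_index hG (hle x) hCx) ▸ index_dvd_of_le h1
      rcases (Fact.out : p.Prime).eq_one_or_self_of_dvd _ hdvd with h | h
      · exact Subgroup.index_eq_one.mp h
      · exfalso
        have hcards : Nat.card K = Nat.card (centralizer ({x} : Set G)) := by
          have e1 := Subgroup.card_mul_index K
          have e2 := Subgroup.card_mul_index (centralizer ({x} : Set G))
          rw [h] at e1
          rw [aux_index hG (hle x) hCx] at e2
          exact Nat.eq_of_mul_eq_mul_right (Fact.out : p.Prime).pos (e1.trans e2.symm)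
        have := Subgroup.eq_of_le_of_card_ge h1 hcards.le
        exact hgx (this ▸ h2)
    rw [Subgroup.mem_center_iff]
    intro u
    exact mem_centralizer_singleton_iff.mp (hKtop ▸ Subgroup.mem_top u : u ∈ K)

/-- the commutator map `g ↦ ⁅x, g⁆` as a homomorphism, given commutators are central -/
private def commHom (x : G) (hx : ∀ g : G, ⁅x, g⁆ ∈ center G) : G →* G where
  toFun g := ⁅x, g⁆
  map_one' := commutatorElement_one_right x
  map_mul' g h := by
    show ⁅x, g * h⁆ = ⁅x, g⁆ * ⁅x, h⁆
    have hc := Subgroup.mem_center_iff.mp (hx h)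
    have e : ⁅x, g * h⁆ = ⁅x, g⁆ * (g * ⁅x, h⁆ * g⁻¹) := by group
    rw [e, hc g, mul_inv_cancel_right]

private theorem commHom_ker (x : G) (hx : ∀ g : G, ⁅x, g⁆ ∈ center G) :
    (commHom x hx).ker = centralizer ({x} : Set G) := by
  ext g
  rw [MonoidHom.mem_ker, mem_centralizer_singleton_iff]
  show ⁅x, g⁆ = 1 ↔ g * x = x * g
  rw [commutatorElement_eq_one_iff_mul_comm]
  exact ⟨fun h => h.symm, fun h => h.symm⟩

private theorem card_commHom_range (hG : IsPGroup p G)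
    (hle : ∀ x : G, (centralizer ({x} : Set G)).index ≤ p)
    (x : G) (hx : ∀ g : G, ⁅x, g⁆ ∈ center G)
    (hxc : centralizer ({x} : Set G) ≠ ⊤) :
    Nat.card (commHom x hx).range = p := by
  rw [← Subgroup.index_ker, commHom_ker]
  exact aux_index hG (hle x) hxc

private theorem eq_zpowers_of_card_eq {H : Subgroup G} (hH : Nat.card H = p) {c : G}
    (hc : c ∈ H) (hc1 : c ≠ 1) : H = Subgroup.zpowers c := by
  have hle : Subgroup.zpowers c ≤ H := Subgroup.zpowers_le.mpr hc
  have hdvd : Nat.card (Subgroup.zpowers c) ∣ p := hH ▸ Subgroup.card_dvd_of_le hle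
  rcases (Fact.out : p.Prime).eq_one_or_self_of_dvd _ hdvd with h | h
  · exfalso
    have := Subgroup.eq_bot_of_card_eq _ h
    exact hc1 (by simpa [this] using Subgroup.mem_zpowers c)
  · exact (Subgroup.eq_of_le_of_card_ge hle (by rw [hH, h])).symm

end Aux

/-- For a finite `p`-group `P`, `|P'| = p` iff `P` is nonabelian and every conjugacy class
has size at most `p`, i.e. `|P : C_P(x)| ≤ p` for all `x ∈ P`. -/
theorem card_commutator_eq_prime_iff
    {P : Type*} [Group P] [Fintype P] (p : ℕ) [Fact p.Prime] (hP : IsPGroup p P) :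
    Nat.card (commutator P) = p ↔
      (¬ ∀ x y : P, x * y = y * x) ∧
        ∀ x : P, (Subgroup.centralizer ({x} : Set P)).index ≤ p := by
  constructor
  · intro hcard
    constructor
    · intro hab
      have hbot : commutator P = ⊥ := by
        rw [_root_.commutator_def, eq_bot_iff]
        refine (Subgroup.commutator_le).mpr fun a _ b _ => ?_
        rw [Subgroup.mem_bot, commutatorElement_eq_one_iff_mul_comm]
        exact hab a b
      rw [hbot] at hcard
      exact (Fact.out : p.Prime).ne_one (by simpa using hcard.symm)
    · intro x
      rw [Subgroup.index_eq_card]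
      have hmem : ∀ g : P, ⁅x, g⁆ ∈ commutator P := fun g => by
        rw [_root_.commutator_def]
        exact Subgroup.commutator_mem_commutator (Subgroup.mem_top x) (Subgroup.mem_top g)
      set f : P ⧸ centralizer ({x} : Set P) → commutator P :=
        fun q => ⟨⁅x, q.out⁆, hmem q.out⟩ with hf
      have hinj : Function.Injective f := by
        intro q r hqr
        have he : ⁅x, q.out⁆ = ⁅x, r.out⁆ := congrArg Subtype.val hqr
        have hmemc : (q.out)⁻¹ * r.out ∈ centralizer ({x} : Set P) := by
          rw [mem_centralizer_singleton_iff]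
          have h1 : q.out * x⁻¹ * (q.out)⁻¹ = r.out * x⁻¹ * (r.out)⁻¹ := by
            have : x * (q.out * x⁻¹ * (q.out)⁻¹) = x * (r.out * x⁻¹ * (r.out)⁻¹) := by
              have e2 : ∀ a : P, x * (a * x⁻¹ * a⁻¹) = ⁅x, a⁆ := fun a => by group
              rw [e2, e2, he]
            exact mul_left_cancel this
          have h3 : x⁻¹ * ((q.out)⁻¹ * r.out) = ((q.out)⁻¹ * r.out) * x⁻¹ := by
            have h4 := congrArg (fun t => (q.out)⁻¹ * t * r.out) h1
            simpa [mul_assoc] using h4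
          exact ((Commute.inv_left_iff.mp h3).symm : _)
        calc q = ((q.out : P) : P ⧸ centralizer ({x} : Set P)) := (QuotientGroup.out_eq' q).symm
          _ = ((r.out : P) : P ⧸ centralizer ({x} : Set P)) := QuotientGroup.eq.mpr hmemc
          _ = r := QuotientGroup.out_eq' r
      calc Nat.card (P ⧸ centralizer ({x} : Set P)) ≤ Nat.card (commutator P) :=
            Nat.card_le_card_of_injective f hinj
        _ = p := hcard
  · rintro ⟨hna, hle⟩
    have hcen : ∀ x g : P, ⁅x, g⁆ ∈ Subgroup.center P := aux_central hP hle
    obtain ⟨a, b, hab⟩ : ∃ a b : P, a * b ≠ b * a := by push_neg at hna; exact hna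
    have hCa : centralizer ({a} : Set P) ≠ ⊤ := fun h =>
      hab (mem_centralizer_singleton_iff.mp (h ▸ Subgroup.mem_top b)).symm
    -- the ranges T x
    set T : P → Subgroup P := fun x => (commHom x (hcen x)).range with hT
    have hTcard : ∀ x : P, centralizer ({x} : Set P) ≠ ⊤ → Nat.card (T x) = p :=
      fun x hx => card_commHom_range hP hle x (hcen x) hx
    have hTmem : ∀ x g : P, ⁅x, g⁆ ∈ T x := fun x g => ⟨g, rfl⟩
    -- pair lemma
    have hpair : ∀ x z : P, centralizer ({x} : Set P) ≠ ⊤ → centralizer ({z} : Set P) ≠ ⊤ →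
        centralizer ({x} : Set P) ≠ centralizer ({z} : Set P) → T x = T z := by
      intro x z hx hz hxz
      have hcards : Nat.card (centralizer ({x} : Set P)) = Nat.card (centralizer ({z} : Set P)) := by
        have e1 := Subgroup.card_mul_index (centralizer ({x} : Set P))
        have e2 := Subgroup.card_mul_index (centralizer ({z} : Set P))
        rw [aux_index hP (hle x) hx] at e1
        rw [aux_index hP (hle z) hz] at e2
        exact Nat.eq_of_mul_eq_mul_right (Fact.out : p.Prime).pos (e1.trans e2.symm)
      obtain ⟨h, hhz, hhx⟩ : ∃ h ∈ centralizer ({z} : Set P), h ∉ centralizer ({x} : Set P) := by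
        rw [← SetLike.not_le_iff_exists]
        intro hcle
        exact hxz (Subgroup.eq_of_le_of_card_ge hcle hcards.le).symm
      obtain ⟨g, hgx, hgz⟩ : ∃ g ∈ centralizer ({x} : Set P), g ∉ centralizer ({z} : Set P) := by
        rw [← SetLike.not_le_iff_exists]
        intro hcle
        exact hxz (Subgroup.eq_of_le_of_card_ge hcle hcards.ge)
      -- the element x * z
      have hzh1 : ⁅z, h⁆ = 1 := by
        rw [commutatorElement_eq_one_iff_mul_comm]
        exact (mem_centralizer_singleton_iff.mp hhz).symm
      have hxg1 : ⁅x, g⁆ = 1 := by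
        rw [commutatorElement_eq_one_iff_mul_comm]
        exact (mem_centralizer_singleton_iff.mp hgx).symm
      have hxh1 : ⁅x, h⁆ ≠ 1 := by
        rw [Ne, commutatorElement_eq_one_iff_mul_comm]
        exact fun e => hhx (mem_centralizer_singleton_iff.mpr e.symm)
      have hzg1 : ⁅z, g⁆ ≠ 1 := by
        rw [Ne, commutatorElement_eq_one_iff_mul_comm]
        exact fun e => hgz (mem_centralizer_singleton_iff.mpr e.symm)
      have hwsplit : ∀ w : P, ⁅x * z, w⁆ = ⁅z, w⁆ * ⁅x, w⁆ := by
        intro w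
        have e : ⁅x * z, w⁆ = x * ⁅z, w⁆ * x⁻¹ * ⁅x, w⁆ := by group
        rw [e, Subgroup.mem_center_iff.mp (hcen z w) x]
        group
      have he1 : ⁅x * z, h⁆ = ⁅x, h⁆ := by rw [hwsplit, hzh1, one_mul]
      have he2 : ⁅x * z, g⁆ = ⁅z, g⁆ := by rw [hwsplit, hxg1, mul_one]
      have hCw : centralizer ({x * z} : Set P) ≠ ⊤ := by
        intro htop
        apply hxh1
        rw [← he1, commutatorElement_eq_one_iff_mul_comm]
        exact (mem_centralizer_singleton_iff.mp (htop ▸ Subgroup.mem_top h)).symm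
      have hw1 : T (x * z) = Subgroup.zpowers ⁅x, h⁆ :=
        eq_zpowers_of_card_eq (hTcard _ hCw) (he1 ▸ hTmem (x * z) h) hxh1
      have hw2 : T (x * z) = Subgroup.zpowers ⁅z, g⁆ :=
        eq_zpowers_of_card_eq (hTcard _ hCw) (he2 ▸ hTmem (x * z) g) hzg1
      have hx1 : T x = Subgroup.zpowers ⁅x, h⁆ :=
        eq_zpowers_of_card_eq (hTcard _ hx) (hTmem x h) hxh1
      have hz1 : T z = Subgroup.zpowers ⁅z, g⁆ :=
        eq_zpowers_of_card_eq (hTcard _ hz) (hTmem z g) hzg1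
      rw [hx1, ← hw1, hw2, ← hz1]
    -- all T's of noncentral elements agree with T a
    have hallT : ∀ u : P, centralizer ({u} : Set P) ≠ ⊤ → T u = T a := by
      by_cases hex : ∃ z : P, centralizer ({z} : Set P) ≠ ⊤ ∧
          centralizer ({z} : Set P) ≠ centralizer ({a} : Set P)
      · obtain ⟨z, hz, hza⟩ := hex
        intro u hu
        by_cases huu : centralizer ({u} : Set P) = centralizer ({a} : Set P)
        · have h1 : T u = T z := hpair u z hu hz (by rw [huu]; exact fun e => hza e.symm)
          have h2 : T a = T z := hpair a z hCa hz (fun e => hza e.symm)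
          rw [h1, ← h2]
        · exact hpair u a hu hCa huu
      · exfalso
        push_neg at hex
        apply hab
        have ha_cen : a ∈ Subgroup.center P := by
          rw [Subgroup.mem_center_iff]
          intro u
          by_cases hu : centralizer ({u} : Set P) = ⊤
          · exact (mem_centralizer_singleton_iff.mp (hu ▸ Subgroup.mem_top a)).symm
          · have : a ∈ centralizer ({u} : Set P) := by
              rw [hex u hu]
              exact mem_centralizer_singleton_iff.mpr rfl
            exact (mem_centralizer_singleton_iff.mp this).symm
        exact (Subgroup.mem_center_iff.mp ha_cen b).symm
    -- conclude : commutator P = T a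
    have hcomm : commutator P = T a := by
      apply le_antisymm
      · rw [_root_.commutator_def]
        refine Subgroup.commutator_le.mpr fun u _ v _ => ?_
        by_cases hu : centralizer ({u} : Set P) = ⊤
        · have : ⁅u, v⁆ = 1 := by
            rw [commutatorElement_eq_one_iff_mul_comm]
            exact (mem_centralizer_singleton_iff.mp (hu ▸ Subgroup.mem_top v)).symm
          rw [this]; exact Subgroup.one_mem _
        · rw [← hallT u hu]; exact hTmem u v
      · rintro _ ⟨g, rfl⟩
        show ⁅a, g⁆ ∈ commutator P
        rw [_root_.commutator_def]
        exact Subgroup.commutator_mem_commutator (Subgroup.mem_top a) (Subgroup.mem_top g)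
    rw [hcomm]
    exact hTcard a hCa
end

section
/- Let G be a finite group, p a prime, and P a Sylow p-subgroup of G with |P| ≥ p². If there exists a p-element x ∈ G such that the p-part of |C_G(x)| equals p², then |P : P'| = p². -/
open Subgroup
open scoped commutatorElement

lemma mySubgroup_eq_of_le_of_card_le {G : Type*} [Group G] [Finite G] {H K : Subgroup G}
    (h : H ≤ K) (hc : Nat.card K ≤ Nat.card H) : H = K := by
  apply SetLike.coe_injective
  apply Set.eq_of_subset_of_ncard_le h
  rwa [← Nat.card_coe_set_eq, ← Nat.card_coe_set_eq]

lemma myNormal_center {p : ℕ} [Fact p.Prime] {Q : Type*} [Group Q] [Finite Q]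
    (hQ : IsPGroup p Q) (N : Subgroup Q) [N.Normal] (hN : N ≠ ⊥) :
    ∃ z : Q, z ∈ N ∧ z ∈ Subgroup.center Q ∧ z ≠ 1 := by
  have hNp : IsPGroup p N := hQ.to_subgroup N
  have hNnt : Nontrivial N := by
    rw [← Subgroup.nontrivial_iff_ne_bot] at hN; exact hN
  obtain ⟨k, hk, hcard⟩ := hNp.nontrivial_iff_card.mp hNnt
  have hdvd : p ∣ Nat.card N := hcard ▸ dvd_pow_self p hk.ne'
  have h1 : (1 : N) ∈ MulAction.fixedPoints (ConjAct Q) N := by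
    intro g
    apply Subtype.ext
    rw [ConjAct.Subgroup.val_conj_smul]
    simp
  obtain ⟨b, hb, hb1⟩ :=
    (hQ.of_equiv ConjAct.toConjAct).exists_fixed_point_of_prime_dvd_card_of_fixed_point
      (α := N) hdvd h1
  refine ⟨(b : Q), b.2, ?_, ?_⟩
  · rw [Subgroup.mem_center_iff]
    intro g
    have := hb (ConjAct.toConjAct g)
    have := congrArg (Subtype.val) this
    rw [ConjAct.Subgroup.val_conj_smul, ConjAct.smul_def] at this
    calc g * b = (ConjAct.ofConjAct (ConjAct.toConjAct g) * b * (ConjAct.ofConjAct (ConjAct.toConjAct g))⁻¹) * g := by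
          rw [ConjAct.ofConjAct_toConjAct]; group
    _ = (b : Q) * g := by rw [this]
  · intro h
    exact hb1 (Subtype.ext h).symm


universe u

lemma pgroup_key (p : ℕ) [Fact p.Prime] (n : ℕ) :
    ∀ (Q : Type u) [Group Q] [Finite Q], Nat.card Q ≤ n → IsPGroup p Q →
    ∀ x : Q, Nat.card (Subgroup.centralizer ({x} : Set Q)) = p ^ 2 →
    (commutator Q).index = p ^ 2 := by
  have hp := (Fact.out : p.Prime)
  induction n with
  | zero =>
    intro Q _ _ hle _ x _
    exact absurd hle (by simpa using Nat.card_pos.ne')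
  | succ n ih =>
    intro Q _ _ hle hQ x hx
    obtain ⟨m, hm⟩ := IsPGroup.iff_card.mp hQ
    have hdvd : p ^ 2 ∣ Nat.card Q := hx ▸ Subgroup.card_subgroup_dvd_card _
    have hm2 : 2 ≤ m := (Nat.pow_dvd_pow_iff_le_right hp.one_lt).mp (hm ▸ hdvd)
    -- x ∈ center → card Q = p^2
    have hxc : x ∈ Subgroup.center Q → Nat.card Q = p ^ 2 := by
      intro h
      have htop : Subgroup.centralizer ({x} : Set Q) = ⊤ := by
        rw [eq_top_iff]
        intro g _
        rw [Subgroup.mem_centralizer_singleton_iff]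
        exact Subgroup.mem_center_iff.mp h g
      rw [← hx, htop, Subgroup.card_top]
    by_cases hm3 : Nat.card Q = p ^ 2
    · -- abelian case
      have hcomm := IsPGroup.commutative_of_card_eq_prime_sq hm3
      have hbot : commutator Q = ⊥ := by
        rw [_root_.commutator_def, Subgroup.commutator_eq_bot_iff_le_centralizer]
        intro g _
        rw [Subgroup.mem_centralizer_iff]
        intro h _
        exact hcomm h g
      rw [hbot, Subgroup.index_bot, hm3]
    · have hm3' : 3 ≤ m := by
        rcases Nat.lt_or_ge m 3 with h | h
        · interval_cases m
          · exact absurd hm hm3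
        · exact h
      have hQnt : Nontrivial Q := by
        rw [← Finite.one_lt_card_iff_nontrivial, hm]
        exact Nat.one_lt_pow (by omega) hp.one_lt
      set Z := Subgroup.center Q with hZdef
      have hZle : Z ≤ Subgroup.centralizer ({x} : Set Q) :=
        Subgroup.center_le_centralizer _
      have hZdvd : Nat.card Z ∣ p ^ 2 := hx ▸ Subgroup.card_dvd_of_le hZle
      have hZnt : Nontrivial Z := hQ.center_nontrivial
      have hZp : Nat.card Z = p := by
        obtain ⟨j, hj2, hZ⟩ := (Nat.dvd_prime_pow hp).mp hZdvd
        interval_cases j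
        · rw [pow_zero] at hZ
          exact absurd hZ Finite.one_lt_card.ne'
        · simpa using hZ
        · exfalso
          apply hm3
          have : Z = Subgroup.centralizer ({x} : Set Q) :=
            mySubgroup_eq_of_le_of_card_le hZle (le_of_eq (by rw [hx, hZ]))
          apply hxc
          rw [this]
          exact Subgroup.mem_centralizer_singleton_iff.mpr rfl
      -- Z ≤ commutator Q
      have hcom_ne : commutator Q ≠ ⊥ := by
        intro h
        apply hm3
        apply hxc
        rw [_root_.commutator_def, Subgroup.commutator_eq_bot_iff_le_centralizer] at h
        rw [hZdef, Subgroup.mem_center_iff]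
        intro g
        exact (Subgroup.mem_centralizer_iff.mp (h (Subgroup.mem_top g)) x (by simp)).symm
      obtain ⟨z, hzN, hzZ, hz1⟩ := myNormal_center hQ (commutator Q) hcom_ne
      have hZcom : Z ≤ commutator Q := by
        have h1 : Subgroup.zpowers z ≤ Z := Subgroup.zpowers_le.mpr hzZ
        have h2 : Nat.card (Subgroup.zpowers z) ∣ p := hZp ▸ Subgroup.card_dvd_of_le h1
        have h3 : Nat.card (Subgroup.zpowers z) = p := by
          rcases (Nat.dvd_prime hp).mp h2 with h | h
          · exfalso
            rw [Nat.card_zpowers, orderOf_eq_one_iff] at h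
            exact hz1 h
          · exact h
        have h4 : Subgroup.zpowers z = Z :=
          mySubgroup_eq_of_le_of_card_le h1 (by rw [h3, hZp])
        rw [← h4]
        exact Subgroup.zpowers_le.mpr hzN
      -- quotient by the center
      set π := QuotientGroup.mk' Z with hπdef
      have hsurj : Function.Surjective π := QuotientGroup.mk'_surjective Z
      have hQ' : IsPGroup p (Q ⧸ Z) := hQ.to_quotient Z
      have hcardQ' : Nat.card (Q ⧸ Z) * p = Nat.card Q := by
        rw [Subgroup.card_eq_card_quotient_mul_card_subgroup Z, hZp]
      have hq' : Nat.card (Q ⧸ Z) = p ^ (m - 1) := by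
        have h5 : Nat.card (Q ⧸ Z) * p = p ^ (m - 1) * p := by
          rw [hcardQ', hm, ← pow_succ]
          congr 1
          omega
        exact Nat.eq_of_mul_eq_mul_right hp.pos h5
      set x' : Q ⧸ Z := π x with hx'def
      set C' := Subgroup.centralizer ({x'} : Set (Q ⧸ Z)) with hC'def
      set H := C'.comap π with hHdef
      have hHidx : H.index = C'.index := C'.index_comap_of_surjective hsurj
      have e1 : Nat.card H * C'.index = Nat.card Q := by
        rw [← hHidx]; exact Subgroup.card_mul_index H
      have e2 : Nat.card C' * C'.index = Nat.card (Q ⧸ Z) := Subgroup.card_mul_index C'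
      have hidx0 : 0 < C'.index := Nat.pos_of_ne_zero Subgroup.index_ne_zero_of_finite
      have hHC : Nat.card H = Nat.card C' * p := by
        apply Nat.eq_of_mul_eq_mul_right hidx0
        rw [e1, ← hcardQ', ← e2]
        ring
      -- the commutator map into the center
      have hker : ∀ h : Q, h ∈ H → ⁅h, x⁆ ∈ Z := by
        intro h hh
        have hh' : π h ∈ C' := Subgroup.mem_comap.mp hh
        have h1 : π ⁅h, x⁆ = 1 := by
          rw [map_commutatorElement, commutatorElement_eq_one_iff_mul_comm]
          exact Subgroup.mem_centralizer_singleton_iff.mp hh'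
        have h2 : ⁅h, x⁆ ∈ π.ker := MonoidHom.mem_ker.mpr h1
        rwa [hπdef, QuotientGroup.ker_mk'] at h2
      set f : H →* Z :=
        { toFun := fun h => ⟨⁅(h : Q), x⁆, hker h h.2⟩
          map_one' := by
            apply Subtype.ext
            show ⁅((1 : H) : Q), x⁆ = 1
            simp
          map_mul' := by
            intro a b
            apply Subtype.ext
            show ⁅(a : Q) * (b : Q), x⁆ = ⁅(a : Q), x⁆ * ⁅(b : Q), x⁆
            have hb := Subgroup.mem_center_iff.mp (hker b b.2)
            have e3 : ⁅(a : Q) * (b : Q), x⁆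
                = (a : Q) * ⁅(b : Q), x⁆ * (a : Q)⁻¹ * ⁅(a : Q), x⁆ := by
              simp only [commutatorElement_def]
              group
            rw [e3, hb (a : Q), mul_inv_cancel_right]
            exact (hb ⁅(a : Q), x⁆).symm } with hfdef
      have hkerle : Nat.card f.ker ≤ p ^ 2 := by
        rw [← hx]
        apply Nat.card_le_card_of_injective
          (f := fun h : f.ker => (⟨((h : H) : Q), by
            have h5 : ⁅((h : H) : Q), x⁆ = 1 :=
              congrArg Subtype.val (MonoidHom.mem_ker.mp h.2)
            rw [Subgroup.mem_centralizer_singleton_iff]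
            exact commutatorElement_eq_one_iff_mul_comm.mp h5⟩ :
            Subgroup.centralizer ({x} : Set Q)))
        intro h₁ h₂ e
        have h6 := congrArg Subtype.val e
        exact Subtype.val_injective (Subtype.val_injective h6)
      have hrange : Nat.card (H ⧸ f.ker) ≤ p := by
        rw [Nat.card_congr (QuotientGroup.quotientKerEquivRange f).toEquiv]
        have h5 : Nat.card f.range ∣ Nat.card Z := Subgroup.card_subgroup_dvd_card f.range
        rw [hZp] at h5
        exact Nat.le_of_dvd hp.pos h5
      have hHle : Nat.card H ≤ p * p ^ 2 := by
        rw [Subgroup.card_eq_card_quotient_mul_card_subgroup f.ker]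
        exact Nat.mul_le_mul hrange hkerle
      have hC'le : Nat.card C' ≤ p ^ 2 := by
        have h5 : Nat.card C' * p ≤ p ^ 2 * p := by
          rw [← hHC]
          calc Nat.card H ≤ p * p ^ 2 := hHle
          _ = p ^ 2 * p := by ring
        exact Nat.le_of_mul_le_mul_right h5 hp.pos
      have hC'ge : p ^ 2 ≤ Nat.card C' := by
        by_cases hcen : x' ∈ Subgroup.center (Q ⧸ Z)
        · have h5 : C' = ⊤ := by
            rw [eq_top_iff]
            intro g _
            rw [Subgroup.mem_centralizer_singleton_iff]
            exact Subgroup.mem_center_iff.mp hcen g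
          rw [h5, Subgroup.card_top, hq']
          exact Nat.pow_le_pow_right hp.pos (by omega)
        · have hle' : Subgroup.center (Q ⧸ Z) ≤ C' := Subgroup.center_le_centralizer _
          have hx'C : x' ∈ C' := Subgroup.mem_centralizer_singleton_iff.mpr rfl
          have hne : Subgroup.center (Q ⧸ Z) ≠ C' := by
            intro h
            exact hcen (by rw [h]; exact hx'C)
          have hQ'nt : Nontrivial (Q ⧸ Z) := by
            rw [← Finite.one_lt_card_iff_nontrivial, hq']
            exact Nat.one_lt_pow (by omega) hp.one_lt
          have hcenNT : Nontrivial (Subgroup.center (Q ⧸ Z)) := hQ'.center_nontrivial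
          obtain ⟨a, ha⟩ := IsPGroup.iff_card.mp (hQ'.to_subgroup (Subgroup.center (Q ⧸ Z)))
          obtain ⟨b, hb⟩ := IsPGroup.iff_card.mp (hQ'.to_subgroup C')
          have hab : p ^ a ∣ p ^ b := ha ▸ hb ▸ Subgroup.card_dvd_of_le hle'
          have ha1 : 1 ≤ a := by
            rcases Nat.eq_zero_or_pos a with h | h
            · rw [h, pow_zero] at ha
              exact absurd ha Finite.one_lt_card.ne'
            · exact h
          have hne' : a ≠ b := by
            intro h
            apply hne
            exact mySubgroup_eq_of_le_of_card_le hle' (by rw [ha, hb, h])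
          have hab' : a < b :=
            lt_of_le_of_ne ((Nat.pow_dvd_pow_iff_le_right hp.one_lt).mp hab) hne'
          rw [hb]
          exact Nat.pow_le_pow_right hp.pos (by omega)
      have hC'eq : Nat.card C' = p ^ 2 := le_antisymm hC'le hC'ge
      have hlt : Nat.card (Q ⧸ Z) ≤ n := by
        have h1 : Nat.card (Q ⧸ Z) < Nat.card Q := by
          rw [← hcardQ']
          exact (Nat.lt_mul_iff_one_lt_right Nat.card_pos).mpr hp.one_lt
        omega
      have hIH := ih (Q ⧸ Z) hlt hQ' x' hC'eq
      have htop : Subgroup.map π ⊤ = ⊤ := by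
        rw [← MonoidHom.range_eq_map]
        exact π.range_eq_top_of_surjective hsurj
      have hmapcom : Subgroup.map π (commutator Q) = commutator (Q ⧸ Z) := by
        rw [_root_.commutator_def, _root_.commutator_def, Subgroup.map_commutator, htop]
      rw [← hIH, ← hmapcom]
      exact ((commutator Q).index_map_eq hsurj
        (by rw [hπdef, QuotientGroup.ker_mk']; exact hZcom)).symm


/-- Let `G` be a finite group, `p` a prime, `P ∈ Syl_p(G)` with `|P| ≥ p ^ 2`. If there is
a `p`-element `x ∈ G` such that the `p`-part of `|C_G(x)|` is `p ^ 2`, then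
`|P : P'| = p ^ 2`. -/
theorem index_commutator_eq_sq_of_exists_pElement
    {G : Type*} [Group G] [Fintype G] (p : ℕ) [Fact p.Prime] (P : Sylow p G)
    (hcard : p ^ 2 ≤ Nat.card (P : Subgroup G))
    (hx : ∃ x : G, (∃ k : ℕ, orderOf x = p ^ k) ∧
      (Nat.card (Subgroup.centralizer ({x} : Set G))).factorization p = 2) :
    (⁅(P : Subgroup G), (P : Subgroup G)⁆).relIndex (P : Subgroup G) = p ^ 2 := by
  classical
  obtain ⟨x, ⟨k, hxord⟩, hfact⟩ := hx
  set C := Subgroup.centralizer ({x} : Set G) with hCdef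
  have hxC : x ∈ C := Subgroup.mem_centralizer_singleton_iff.mpr rfl
  have hordx : orderOf (⟨x, hxC⟩ : C) = p ^ k := by
    rw [← hxord]
    exact (orderOf_injective C.subtype (Subgroup.subtype_injective C) ⟨x, hxC⟩).symm
  have hzp : IsPGroup p (Subgroup.zpowers (⟨x, hxC⟩ : C)) :=
    IsPGroup.of_card (by rw [Nat.card_zpowers, hordx])
  obtain ⟨S, hS⟩ := hzp.exists_le_sylow
  have hcardS : Nat.card S = p ^ 2 := by
    rw [S.card_eq_multiplicity, hfact]
  set S' := Subgroup.map C.subtype (S : Subgroup C) with hS'def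
  have hcardS' : Nat.card S' = p ^ 2 := by
    rw [← hcardS]
    exact (Nat.card_congr (Subgroup.equivMapOfInjective _ _
      (Subgroup.subtype_injective C)).toEquiv).symm
  obtain ⟨R, hSR⟩ := (IsPGroup.of_card (n := 2) hcardS').exists_le_sylow
  obtain ⟨g, hg⟩ := MulAction.exists_smul_eq G R P
  set σ := (MulAut.conj g).toMonoidHom with hσdef
  have hσinj : Function.Injective σ := (MulAut.conj g).injective
  set T := Subgroup.map σ S' with hTdef
  have hPmap : Subgroup.map σ (R : Subgroup G) = (P : Subgroup G) := by
    rw [← hg]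
    rfl
  have hTP : T ≤ (P : Subgroup G) := by
    rw [← hPmap]; exact Subgroup.map_mono hSR
  set y := g * x * g⁻¹ with hydef
  have hσx : σ x = y := rfl
  have hxS' : x ∈ S' := ⟨⟨x, hxC⟩, hS (Subgroup.mem_zpowers _), rfl⟩
  have hyT : y ∈ T := ⟨x, hxS', rfl⟩
  have hyP : y ∈ (P : Subgroup G) := hTP hyT
  have hS'C : S' ≤ C := by
    rw [hS'def]; rintro w ⟨s, _, rfl⟩; exact s.2
  have hTcomm : ∀ t ∈ T, t * y = y * t := by
    rintro _ ⟨s, hs, rfl⟩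
    have h1 : s * x = x * s := Subgroup.mem_centralizer_singleton_iff.mp (hS'C hs)
    show σ s * y = y * σ s
    rw [← hσx, ← map_mul, ← map_mul, h1]
  have hconj : Subgroup.centralizer ({y} : Set G) = Subgroup.map σ C := by
    ext w
    simp only [Subgroup.mem_centralizer_singleton_iff, Subgroup.mem_map]
    constructor
    · intro h
      refine ⟨g⁻¹ * w * g, ?_, ?_⟩
      · rw [hCdef, Subgroup.mem_centralizer_singleton_iff]
        have h2 := congrArg (fun t => g⁻¹ * t * g) h
        simpa [hydef, mul_assoc] using h2
      · show g * (g⁻¹ * w * g) * g⁻¹ = w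
        group
    · rintro ⟨c, hc, rfl⟩
      have h1 : c * x = x * c := Subgroup.mem_centralizer_singleton_iff.mp hc
      show σ c * y = y * σ c
      rw [← hσx, ← map_mul, ← map_mul, h1]
  have hfact' : (Nat.card (Subgroup.centralizer ({y} : Set G))).factorization p = 2 := by
    have h2 : Nat.card (Subgroup.map σ C) = Nat.card C :=
      (Nat.card_congr (Subgroup.equivMapOfInjective C σ hσinj).toEquiv).symm
    rw [hconj, h2, hfact]
  set t₀ : ↥(P : Subgroup G) := ⟨y, hyP⟩ with ht₀def
  set D := Subgroup.centralizer ({t₀} : Set ↥(P : Subgroup G)) with hDdef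
  have hTsub : (T.subgroupOf (P : Subgroup G)) ≤ D := by
    intro u hu
    rw [Subgroup.mem_subgroupOf] at hu
    rw [hDdef, Subgroup.mem_centralizer_singleton_iff]
    apply Subtype.ext
    exact hTcomm (↑u) hu
  have hcardT : Nat.card T = p ^ 2 := by
    rw [← hcardS']
    exact (Nat.card_congr (Subgroup.equivMapOfInjective _ _ hσinj).toEquiv).symm
  have hdvd1 : p ^ 2 ∣ Nat.card D := by
    rw [← hcardT]
    have h3 : Nat.card (T.subgroupOf (P : Subgroup G)) = Nat.card T :=
      Nat.card_congr (Subgroup.subgroupOfEquivOfLe hTP).toEquiv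
    rw [← h3]
    exact Subgroup.card_dvd_of_le hTsub
  have hdvd2 : Nat.card D ∣ p ^ 2 := by
    set E := Subgroup.map (P : Subgroup G).subtype D with hEdef
    have hEcard : Nat.card E = Nat.card D :=
      (Nat.card_congr (Subgroup.equivMapOfInjective _ _
        (Subgroup.subtype_injective _)).toEquiv).symm
    have hEle : E ≤ Subgroup.centralizer ({y} : Set G) := by
      rintro _ ⟨d, hd, rfl⟩
      rw [Subgroup.mem_centralizer_singleton_iff]
      have h1 : d * t₀ = t₀ * d := Subgroup.mem_centralizer_singleton_iff.mp hd
      exact congrArg Subtype.val h1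
    have hDp : IsPGroup p D := P.2.to_subgroup D
    have hEp : IsPGroup p (E.subgroupOf (Subgroup.centralizer ({y} : Set G))) := by
      have h4 : IsPGroup p E :=
        hDp.of_equiv (Subgroup.equivMapOfInjective _ _ (Subgroup.subtype_injective _))
      exact h4.of_equiv (Subgroup.subgroupOfEquivOfLe hEle).symm
    obtain ⟨S₂, hS₂⟩ := hEp.exists_le_sylow
    have h2 : Nat.card (E.subgroupOf (Subgroup.centralizer ({y} : Set G))) ∣ Nat.card S₂ :=
      Subgroup.card_dvd_of_le hS₂
    rw [S₂.card_eq_multiplicity, hfact'] at h2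
    rw [← hEcard, ← Nat.card_congr (Subgroup.subgroupOfEquivOfLe hEle).toEquiv]
    exact h2
  have hD : Nat.card D = p ^ 2 := Nat.dvd_antisymm hdvd2 hdvd1
  have hkey := pgroup_key p (Nat.card ↥(P : Subgroup G)) ↥(P : Subgroup G) le_rfl P.2 t₀ hD
  have hsub : (⁅(P : Subgroup G), (P : Subgroup G)⁆).subgroupOf (P : Subgroup G)
      = commutator ↥(P : Subgroup G) := by
    rw [_root_.commutator_def]
    have h1 : ⁅(P : Subgroup G), (P : Subgroup G)⁆
        = Subgroup.map (P : Subgroup G).subtype ⁅(⊤ : Subgroup ↥(P : Subgroup G)), ⊤⁆ := by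
      rw [Subgroup.map_commutator, ← MonoidHom.range_eq_map, Subgroup.range_subtype]
    rw [h1, Subgroup.subgroupOf,
      Subgroup.comap_map_eq_self_of_injective (Subgroup.subtype_injective _)]
  show ((⁅(P : Subgroup G), (P : Subgroup G)⁆).subgroupOf (P : Subgroup G)).index = p ^ 2
  rw [hsub]
  exact hkey
end

section
/- Let G be a finite group, p a prime, P a Sylow p-subgroup of G, and M a normal subgroup of G such that C_M(P) = 1 (the only element of M commuting with all of P is the identity). Then M is a p'-group, i.e., p does not divide |M|. -/
/-- Let `G` be a finite group, `p` a prime, `P ∈ Syl_p(G)`, and `M ⊴ G` with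
`C_M(P) = 1`. Then `p` does not divide `|M|`. -/
theorem not_dvd_card_of_centralizer_inf_eq_bot
    {G : Type*} [Group G] [Fintype G] (p : ℕ) [Fact p.Prime] (P : Sylow p G)
    (M : Subgroup G) (hM : M.Normal)
    (hC : M ⊓ Subgroup.centralizer ((P : Subgroup G) : Set G) = ⊥) :
    ¬ p ∣ Nat.card M := by
  intro hdvd
  have hp : p.Prime := Fact.out
  -- get an element of order `p` in `M`
  haveI : Fintype M := Fintype.ofFinite M
  obtain ⟨m, hm⟩ := exists_prime_orderOf_dvd_card (G := M) p
    (by simpa [← Nat.card_eq_fintype_card] using hdvd)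
  have hxM : (m : G) ∈ M := m.2
  have hxord : orderOf (m : G) = p := by rw [Subgroup.orderOf_coe]; exact hm
  -- conjugate it into `P`
  have hS : IsPGroup p (Subgroup.zpowers (m : G)) := by
    apply IsPGroup.of_card (n := 1)
    rw [Nat.card_zpowers, hxord, pow_one]
  obtain ⟨Q, hQ⟩ := hS.exists_le_sylow
  obtain ⟨g, hg⟩ := MulAction.exists_smul_eq G Q P
  have hxQ : (m : G) ∈ (Q : Subgroup G) := hQ (Subgroup.mem_zpowers _)
  set y : G := g * (m : G) * g⁻¹ with hy
  have hyP : y ∈ (P : Subgroup G) := by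
    rw [← hg, Sylow.coe_subgroup_smul]
    exact Subgroup.smul_mem_pointwise_smul _ _ _ hxQ
  have hyM : y ∈ M := hM.conj_mem _ hxM g
  have hyord : orderOf y = p := by
    have : y = MulAut.conj g (m : G) := by simp [hy, MulAut.conj_apply]
    rw [this, MulEquiv.orderOf_eq, hxord]
  -- the subgroup `M ∩ P` viewed inside `P`
  set H : Subgroup (P : Subgroup G) := M.subgroupOf (P : Subgroup G) with hH
  haveI : H.Normal := Subgroup.normal_subgroupOf
  have hyH : (⟨y, hyP⟩ : (P : Subgroup G)) ∈ H := hyM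
  have hdvdH : p ∣ Nat.card H := by
    have h1 : orderOf (⟨⟨y, hyP⟩, hyH⟩ : H) = p := by
      rw [Subgroup.orderOf_mk, Subgroup.orderOf_mk, hyord]
    have h2 := orderOf_dvd_natCard (⟨⟨y, hyP⟩, hyH⟩ : H)
    rwa [h1] at h2
  -- conjugation action of `P` on `H`
  letI : MulAction (P : Subgroup G) H :=
    MulAction.compHom H (MulAut.conjNormal : (P : Subgroup G) →* MulAut H)
  have hPp : IsPGroup p (P : Subgroup G) := P.isPGroup'
  have hmod := hPp.card_modEq_card_fixedPoints H
  -- fixed points are trivial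
  have hfix : ∀ a : H, a ∈ MulAction.fixedPoints (P : Subgroup G) H → a = 1 := by
    intro a ha
    have hcent : ((a : (P : Subgroup G)) : G) ∈
        Subgroup.centralizer ((P : Subgroup G) : Set G) := by
      intro x hx
      have hfx := ha (⟨x, hx⟩ : (P : Subgroup G))
      have h1 : (⟨x, hx⟩ : (P : Subgroup G)) * (a : (P : Subgroup G))
          * (⟨x, hx⟩ : (P : Subgroup G))⁻¹ = (a : (P : Subgroup G)) := by
        rw [← MulAut.conjNormal_apply]
        exact congrArg Subtype.val hfx
      have h3 : x * ((a : (P : Subgroup G)) : G) * x⁻¹ = ((a : (P : Subgroup G)) : G) :=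
        congrArg Subtype.val h1
      calc x * ((a : (P : Subgroup G)) : G)
          = (x * ((a : (P : Subgroup G)) : G) * x⁻¹) * x := by group
        _ = ((a : (P : Subgroup G)) : G) * x := by rw [h3]
    have hmem : ((a : (P : Subgroup G)) : G) ∈
        M ⊓ Subgroup.centralizer ((P : Subgroup G) : Set G) := ⟨a.2, hcent⟩
    rw [hC, Subgroup.mem_bot] at hmem
    ext
    exact_mod_cast hmem
  have hcard1 : Nat.card (MulAction.fixedPoints (P : Subgroup G) H) = 1 := by
    have hne : (1 : H) ∈ MulAction.fixedPoints (P : Subgroup G) H := by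
      intro x; simp [MulAction.compHom_smul_def]
    rw [Nat.card_eq_one_iff_unique]
    constructor
    · constructor
      intro a b
      ext
      rw [hfix a.1 a.2, hfix b.1 b.2]
    · exact ⟨⟨1, hne⟩⟩
  rw [hcard1] at hmod
  have h0 : Nat.card H % p = 0 := Nat.eq_zero_of_dvd_of_lt hdvdH |> fun _ => Nat.mod_eq_zero_of_dvd hdvdH
  have h1 : 1 % p = 0 := by rw [← hmod]; exact h0
  have := Nat.mod_eq_of_lt hp.one_lt
  omega
end

section
/- Let G be a finite group, p a prime, and P a Sylow p-subgroup of G. If L and M are normal subgroups of G with C_L(P) = 1 and C_M(P) = 1, then C_{LM}(P) = 1, where LM denotes the (normal) subgroup generated by L and M. -/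
open Subgroup MulAction Pointwise

/-- Conjugation action of a subgroup on an invariant subset. -/
private def conjActionAux {G : Type*} [Group G] (P : Subgroup G) (S : Set G)
    (hS : ∀ u ∈ P, ∀ y ∈ S, u * y * u⁻¹ ∈ S) : MulAction P S where
  smul u y := ⟨(u : G) * y * (u : G)⁻¹, hS u u.2 y y.2⟩
  one_smul y := Subtype.ext (show ((1 : P) : G) * y * ((1 : P) : G)⁻¹ = y by simp)
  mul_smul u v y := Subtype.ext
    (show ((u * v : P) : G) * y * ((u * v : P) : G)⁻¹
        = (u : G) * ((v : G) * y * (v : G)⁻¹) * (u : G)⁻¹ by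
      push_cast; group)

private lemma fixed_point_aux {G : Type*} [Group G] [Fintype G] (p : ℕ) [Fact p.Prime]
    (P : Sylow p G) (S : Set G) (hS : ∀ u ∈ (P : Subgroup G), ∀ y ∈ S, u * y * u⁻¹ ∈ S)
    (hcard : ¬ p ∣ Nat.card S) :
    ∃ y ∈ S, ∀ u ∈ (P : Subgroup G), u * y * u⁻¹ = y := by
  letI := conjActionAux (P : Subgroup G) S hS
  obtain ⟨⟨y, hy⟩, hfix⟩ := IsPGroup.nonempty_fixed_point_of_prime_not_dvd_card
    (G := (P : Subgroup G)) P.2 S hcard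
  exact ⟨y, hy, fun u hu => congrArg Subtype.val (hfix ⟨u, hu⟩)⟩

private lemma second_fixed_point_aux {G : Type*} [Group G] [Fintype G] (p : ℕ) [Fact p.Prime]
    (P : Sylow p G) (S : Set G) (hS : ∀ u ∈ (P : Subgroup G), ∀ y ∈ S, u * y * u⁻¹ ∈ S)
    (h1 : (1 : G) ∈ S) (hcard : p ∣ Nat.card S) :
    ∃ y ∈ S, y ≠ 1 ∧ ∀ u ∈ (P : Subgroup G), u * y * u⁻¹ = y := by
  letI := conjActionAux (P : Subgroup G) S hS
  have h1fix : (⟨1, h1⟩ : S) ∈ fixedPoints (P : Subgroup G) S := by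
    intro u
    exact Subtype.ext (show (u : G) * 1 * (u : G)⁻¹ = 1 by simp)
  obtain ⟨⟨y, hy⟩, hfix, hne⟩ := IsPGroup.exists_fixed_point_of_prime_dvd_card_of_fixed_point
    (G := (P : Subgroup G)) P.2 (α := S) hcard h1fix
  refine ⟨y, hy, fun h => hne ?_, fun u hu => congrArg Subtype.val (hfix ⟨u, hu⟩)⟩
  exact Subtype.ext h.symm

/-- A normal subgroup with trivial centralizer intersection has order coprime to `p`. -/
private lemma not_dvd_card_aux {G : Type*} [Group G] [Fintype G] (p : ℕ) [Fact p.Prime]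
    (P : Sylow p G) (M : Subgroup G) (hM : M.Normal)
    (hCM : M ⊓ Subgroup.centralizer ((P : Subgroup G) : Set G) = ⊥) :
    ¬ p ∣ Nat.card M := by
  intro hdvd
  -- Cauchy: get an element of order p in M
  haveI : Fintype M := Fintype.ofFinite _
  obtain ⟨g, hg⟩ := exists_prime_orderOf_dvd_card (G := M) p (by
    rwa [Nat.card_eq_fintype_card] at hdvd)
  -- conjugate it into P
  have hpg : IsPGroup p (Subgroup.zpowers (g : G)) := by
    apply IsPGroup.of_card (n := 1)
    rw [Nat.card_zpowers, pow_one, ← hg, orderOf_submonoid]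
  obtain ⟨R, hR⟩ := hpg.exists_le_sylow
  obtain ⟨c, hc⟩ := MulAction.exists_smul_eq G R P
  have hgP : c * (g : G) * c⁻¹ ∈ (P : Subgroup G) := by
    have hset : (MulAut.conj c • (R : Set G)) = (P : Set G) := by
      rw [← Sylow.coe_smul, hc]
    have : MulAut.conj c (g : G) ∈ MulAut.conj c • (R : Set G) :=
      Set.smul_mem_smul_set (hR (Subgroup.mem_zpowers _))
    rw [hset] at this
    simp [MulAut.conj_apply] at this
    exact this
  have hgM : c * (g : G) * c⁻¹ ∈ M := hM.conj_mem _ g.2 c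
  have hgne : c * (g : G) * c⁻¹ ≠ 1 := by
    intro h
    have hG1 : (g : G) = 1 := by
      have := congrArg (fun z => c⁻¹ * z * c) h
      simpa [mul_assoc] using this
    have : g = 1 := Subtype.ext hG1
    rw [this, orderOf_one] at hg
    exact (Fact.out : p.Prime).one_lt.ne' hg.symm
  -- the subgroup M ⊓ P is a nontrivial p-group
  set K : Subgroup G := M ⊓ (P : Subgroup G) with hK
  have hKp : IsPGroup p K := IsPGroup.to_inf_right P.2
  have hKne : Nontrivial K := by
    refine ⟨⟨⟨c * (g : G) * c⁻¹, Subgroup.mem_inf.mpr ⟨hgM, hgP⟩⟩, 1, fun h => hgne ?_⟩⟩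
    exact congrArg Subtype.val h
  have hKdvd : p ∣ Nat.card (K : Set G) := by
    obtain ⟨k, hk0, hk⟩ := (IsPGroup.nontrivial_iff_card hKp).mp hKne
    have h' : Nat.card (K : Set G) = Nat.card K := Nat.card_congr (Equiv.refl _)
    rw [h', hk]
    exact dvd_pow_self p hk0.ne'
  have hSinv : ∀ u ∈ (P : Subgroup G), ∀ z ∈ (K : Set G), u * z * u⁻¹ ∈ (K : Set G) := by
    intro u hu z hz
    have hz' : z ∈ K := hz
    obtain ⟨hz1, hz2⟩ := Subgroup.mem_inf.mp hz'
    show u * z * u⁻¹ ∈ K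
    exact Subgroup.mem_inf.mpr ⟨hM.conj_mem z hz1 u,
      mul_mem (mul_mem hu hz2) (inv_mem hu)⟩
  obtain ⟨y, hy, hyne, hyfix⟩ := second_fixed_point_aux p P (K : Set G) hSinv K.one_mem hKdvd
  have hyK : y ∈ K := hy
  have hyC : y ∈ Subgroup.centralizer ((P : Subgroup G) : Set G) := by
    rw [Subgroup.mem_centralizer_iff]
    intro u hu
    have h := hyfix u hu
    calc u * y = u * y * u⁻¹ * u := by group
    _ = y * u := by rw [h]
  have : y ∈ M ⊓ Subgroup.centralizer ((P : Subgroup G) : Set G) :=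
    ⟨(Subgroup.mem_inf.mp hyK).1, hyC⟩
  rw [hCM, Subgroup.mem_bot] at this
  exact hyne this

/-- Let `G` be a finite group, `p` a prime, `P ∈ Syl_p(G)`. If `L, M ⊴ G` satisfy
`C_L(P) = 1` and `C_M(P) = 1`, then `C_{LM}(P) = 1`. -/
theorem sup_inf_centralizer_eq_bot
    {G : Type*} [Group G] [Fintype G] (p : ℕ) [Fact p.Prime] (P : Sylow p G)
    (L M : Subgroup G) (hL : L.Normal) (hM : M.Normal)
    (hCL : L ⊓ Subgroup.centralizer ((P : Subgroup G) : Set G) = ⊥)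
    (hCM : M ⊓ Subgroup.centralizer ((P : Subgroup G) : Set G) = ⊥) :
    (L ⊔ M) ⊓ Subgroup.centralizer ((P : Subgroup G) : Set G) = ⊥ := by
  have hMp' := not_dvd_card_aux p P M hM hCM
  rw [eq_bot_iff]
  rintro x ⟨hxLM, hxC⟩
  -- write x = l * m
  haveI := hM
  have hx' : x ∈ (L : Set G) * (M : Set G) := by
    rw [← Subgroup.mul_normal L M]
    exact hxLM
  obtain ⟨l, hl, m, hm, hlm⟩ := hx'
  -- the coset (L ⊓ M) * m
  set S : Set G := (· * m) '' ((L ⊓ M : Subgroup G) : Set G) with hSdef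
  have hxu : ∀ u ∈ (P : Subgroup G), u * x * u⁻¹ = x := by
    intro u hu
    have h := (Subgroup.mem_centralizer_iff.mp hxC) u hu
    calc u * x * u⁻¹ = x * u * u⁻¹ := by rw [h]
    _ = x := by group
  -- conjugation by P preserves S
  have hS : ∀ u ∈ (P : Subgroup G), ∀ y ∈ S, u * y * u⁻¹ ∈ S := by
    rintro u hu y ⟨z, hz, rfl⟩
    have hz' : z ∈ L ⊓ M := hz
    obtain ⟨hzL, hzM⟩ := Subgroup.mem_inf.mp hz'
    refine ⟨u * (z * m) * u⁻¹ * m⁻¹, ?_, by group⟩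
    show u * (z * m) * u⁻¹ * m⁻¹ ∈ L ⊓ M
    refine Subgroup.mem_inf.mpr ⟨?_, ?_⟩
    · -- in L
      have hmL : u * m * u⁻¹ * m⁻¹ ∈ L := by
        have hm' : m = l⁻¹ * x := by rw [← hlm]; group
        have hc1 : u * x = x * u := by
          have h := hxu u hu
          calc u * x = u * x * u⁻¹ * u := by group
          _ = x * u := by rw [h]
        have hux' : x * u⁻¹ = u⁻¹ * x := by
          calc x * u⁻¹ = u⁻¹ * (u * x) * u⁻¹ := by group
          _ = u⁻¹ * (x * u) * u⁻¹ := by rw [hc1]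
          _ = u⁻¹ * x := by group
        have h1 : u * m * u⁻¹ = (u * l⁻¹ * u⁻¹) * x := by
          rw [hm']
          calc u * (l⁻¹ * x) * u⁻¹ = u * l⁻¹ * (x * u⁻¹) := by group
          _ = u * l⁻¹ * (u⁻¹ * x) := by rw [hux']
          _ = u * l⁻¹ * u⁻¹ * x := by group
        rw [h1, hm']
        have h2 : u * l⁻¹ * u⁻¹ * x * (l⁻¹ * x)⁻¹ = (u * l⁻¹ * u⁻¹) * l := by group
        rw [h2]
        exact mul_mem (hL.conj_mem _ (inv_mem hl) u) hl
      have h3 : u * (z * m) * u⁻¹ * m⁻¹ = (u * z * u⁻¹) * (u * m * u⁻¹ * m⁻¹) := by group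
      rw [h3]
      exact mul_mem (hL.conj_mem _ hzL u) hmL
    · -- in M
      exact mul_mem (hM.conj_mem _ (mul_mem hzM hm) u) (inv_mem hm)
  -- |S| = |L ⊓ M| is coprime to p
  have hcard : ¬ p ∣ Nat.card S := by
    have h1 : Nat.card S = Nat.card ((L ⊓ M : Subgroup G) : Set G) := by
      rw [hSdef, Nat.card_image_of_injective (mul_left_injective m)]
    have h2 : Nat.card (L ⊓ M : Subgroup G) ∣ Nat.card M :=
      Subgroup.card_dvd_of_le inf_le_right
    rw [h1]
    intro hdvd
    exact hMp' (dvd_trans hdvd h2)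
  obtain ⟨y, hyS, hyfix⟩ := fixed_point_aux p P S hS hcard
  obtain ⟨z, hz, rfl⟩ := hyS
  have hz' : z ∈ L ⊓ M := hz
  obtain ⟨hzL, hzM⟩ := Subgroup.mem_inf.mp hz'
  have hyC : z * m ∈ Subgroup.centralizer ((P : Subgroup G) : Set G) := by
    rw [Subgroup.mem_centralizer_iff]
    intro u hu
    have h := hyfix u hu
    calc u * (z * m) = u * (z * m) * u⁻¹ * u := by group
    _ = (z * m) * u := by rw [h]
  have hzm : z * m ∈ M ⊓ Subgroup.centralizer ((P : Subgroup G) : Set G) :=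
    ⟨mul_mem hzM hm, hyC⟩
  rw [hCM, Subgroup.mem_bot] at hzm
  -- so m = z⁻¹ ∈ L, hence x ∈ L
  have hmL : m ∈ L := by
    rw [(inv_eq_of_mul_eq_one_right hzm).symm]
    exact inv_mem hzL
  have hxL : x ∈ L := by rw [← hlm]; exact mul_mem hl hmL
  have hx2 : x ∈ L ⊓ Subgroup.centralizer ((P : Subgroup G) : Set G) := ⟨hxL, hxC⟩
  rw [hCL, Subgroup.mem_bot] at hx2
  exact hx2
end
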